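/- arXiv:2109.06259 — 15 statements merged into one kernel-verified Lean document; each statement's English description precedes it below -/
import Mathlib

section
/- In a system (A,p,0,1) satisfying C1–C4, negation defined by ā = p(1,a,0) is an involution: the double negation of a equals a. -/
theorem stmt_1_general {A : Type*} (p : A → A → A → A) (z o : A)
    (C1 : ∀ a, p z a o = a)
    (C3 : ∀ a b1 b2 b3 c, p a (p b1 b2 b3) c = p (p a b1 c) b2 (p a b3 c))
    (C4 : ∀ a b, p a z b = a ∧ p b o a = a) :
    ∀ a, p o (p o a z) z = a := by
  intro a
  calc p o (p o a z) z = p (p o o z) a (p o z z) := C3 o o a z z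
    _ = p z a o := by rw [(C4 z o).2, (C4 o z).1]
    _ = a := C1 a

theorem stmt_1 {A : Type*} (p : A → A → A → A) (z o : A)
    (C1 : ∀ a, p z a o = a)
    (C2 : ∀ a b, p a b a = a)
    (C3 : ∀ a b1 b2 b3 c, p a (p b1 b2 b3) c = p (p a b1 c) b2 (p a b3 c))
    (C4 : ∀ a b, p a z b = a ∧ p b o a = a) :
    ∀ a, p o (p o a z) z = a :=
  stmt_1_general p z o C1 C3 C4
end

section
/- In a system (A,p,0,1) satisfying C1–C4, for all a,b,c: p(c,b,a) = p(a,b̄,c), where b̄ = p(1,b,0). -/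
theorem stmt_2_general {A : Type*} (p : A → A → A → A) (z o : A)
    (C3 : ∀ a b1 b2 b3 c, p a (p b1 b2 b3) c = p (p a b1 c) b2 (p a b3 c))
    (C4 : ∀ a b, p a z b = a ∧ p b o a = a) :
    ∀ a b c, p c b a = p a (p o b z) c := by
  intro a b c
  calc p c b a = p (p a o c) b (p a z c) := by rw [(C4 a c).1, (C4 c a).2]
    _ = p a (p o b z) c := (C3 a o b z c).symm

theorem stmt_2 {A : Type*} (p : A → A → A → A) (z o : A)
    (C1 : ∀ a, p z a o = a)
    (C2 : ∀ a b, p a b a = a)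
    (C3 : ∀ a b1 b2 b3 c, p a (p b1 b2 b3) c = p (p a b1 c) b2 (p a b3 c))
    (C4 : ∀ a b, p a z b = a ∧ p b o a = a) :
    ∀ a b c, p c b a = p a (p o b z) c :=
  stmt_2_general p z o C3 C4
end

section
/- In a system (A,p,0,1) satisfying C1–C4, the negation of p(a,b,c) equals p(c̄,b̄,ā), where x̄ = p(1,x,0). -/
theorem stmt_4_general {A : Type*} (p : A → A → A → A) (z o : A)
    (C3 : ∀ a b1 b2 b3 c, p a (p b1 b2 b3) c = p (p a b1 c) b2 (p a b3 c))
    (C4 : ∀ a b, p a z b = a ∧ p b o a = a) :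
    ∀ a b c, p o (p a b c) z = p (p o c z) (p o b z) (p o a z) := by
  intro a b c
  calc p o (p a b c) z = p (p o a z) b (p o c z) := C3 o a b c z
    _ = p (p (p o c z) o (p o a z)) b (p (p o c z) z (p o a z)) := by
        rw [(C4 _ _).1, (C4 _ _).2]
    _ = p (p o c z) (p o b z) (p o a z) := (C3 _ o b z _).symm

theorem stmt_4 {A : Type*} (p : A → A → A → A) (z o : A)
    (C1 : ∀ a, p z a o = a)
    (C2 : ∀ a b, p a b a = a)
    (C3 : ∀ a b1 b2 b3 c, p a (p b1 b2 b3) c = p (p a b1 c) b2 (p a b3 c))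
    (C4 : ∀ a b, p a z b = a ∧ p b o a = a) :
    ∀ a b c, p o (p a b c) z = p (p o c z) (p o b z) (p o a z) :=
  stmt_4_general p z o C3 C4
end

section
/- In a system (A,p,0,1) satisfying C1–C4, with a∧b = p(0,a,b), a∨b = p(a,b,1) and x̄ = p(1,x,0), De Morgan's laws hold in the form: the negation of a∧b equals b̄∨ā, and the negation of a∨b equals b̄∧ā. -/
/-! Distributivity (C3) of negation `p o · z` over the middle argument, followed by the absorption
laws (C4), turns both sides of the first law into `p o a b̄` and both sides of the second into
`p ā b z`. -/

theorem stmt_5_general {A : Type*} (p : A → A → A → A) (z o : A)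
    (C3 : ∀ a b1 b2 b3 c, p a (p b1 b2 b3) c = p (p a b1 c) b2 (p a b3 c))
    (C4 : ∀ a b, p a z b = a ∧ p b o a = a) :
    ∀ a b, p o (p z a b) z = p (p o b z) (p o a z) o ∧ p o (p a b o) z = p z (p o b z) (p o a z) := by
  have hz : ∀ a b, p a z b = a := fun a b => (C4 a b).1
  have ho : ∀ a b, p b o a = a := fun a b => (C4 a b).2
  intro a b
  constructor
  · calc p o (p z a b) z = p o a (p o b z) := by rw [C3, hz]
      _ = p (p o b z) (p o a z) o := by rw [C3, ho, hz]
  · calc p o (p a b o) z = p (p o a z) b z := by rw [C3, ho]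
      _ = p z (p o b z) (p o a z) := by rw [C3, hz, ho]

theorem stmt_5 {A : Type*} (p : A → A → A → A) (z o : A)
    (C1 : ∀ a, p z a o = a)
    (C2 : ∀ a b, p a b a = a)
    (C3 : ∀ a b1 b2 b3 c, p a (p b1 b2 b3) c = p (p a b1 c) b2 (p a b3 c))
    (C4 : ∀ a b, p a z b = a ∧ p b o a = a) :
    ∀ a b, p o (p z a b) z = p (p o b z) (p o a z) o ∧ p o (p a b o) z = p z (p o b z) (p o a z) :=
  stmt_5_general p z o C3 C4
end

section
/- In a system (A,p,0,1) satisfying C1–C4, the operation a∧b = p(0,a,b) is associative with identity 1, i.e., (A,∧,1) is a monoid. -/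
theorem stmt_6_general {A : Type*} (p : A → A → A → A) (z o : A)
    (C1 : ∀ a, p z a o = a)
    (C3 : ∀ a b1 b2 b3 c, p a (p b1 b2 b3) c = p (p a b1 c) b2 (p a b3 c))
    (C4 : ∀ a b, p a z b = a ∧ p b o a = a) :
    (∀ a b c, p z (p z a b) c = p z a (p z b c)) ∧ (∀ a, p z a o = a ∧ p z o a = a) := by
  refine ⟨fun a b c => ?_, fun a => ⟨C1 a, (C4 a z).2⟩⟩
  rw [C3, (C4 z c).1]

theorem stmt_6 {A : Type*} (p : A → A → A → A) (z o : A)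
    (C1 : ∀ a, p z a o = a)
    (C2 : ∀ a b, p a b a = a)
    (C3 : ∀ a b1 b2 b3 c, p a (p b1 b2 b3) c = p (p a b1 c) b2 (p a b3 c))
    (C4 : ∀ a b, p a z b = a ∧ p b o a = a) :
    (∀ a b c, p z (p z a b) c = p z a (p z b c)) ∧ (∀ a, p z a o = a ∧ p z o a = a) :=
  stmt_6_general p z o C1 C3 C4
end

section
/- In a system (A,p,0,1) satisfying C1–C4, the operation a∨b = p(a,b,1) is associative with identity 0, i.e., (A,∨,0) is a monoid. -/
theorem stmt_7_general {A : Type*} (p : A → A → A → A) (z o : A)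
    (C1 : ∀ a, p z a o = a)
    (C3 : ∀ a b1 b2 b3 c, p a (p b1 b2 b3) c = p (p a b1 c) b2 (p a b3 c))
    (C4 : ∀ a b, p a z b = a ∧ p b o a = a) :
    (∀ a b c, p (p a b o) c o = p a (p b c o) o) ∧ (∀ a, p a z o = a ∧ p z a o = a) := by
  have join_one : ∀ a, p a o o = o := fun a => (C4 o a).2
  refine ⟨fun a b c => ?_, fun a => ⟨(C4 a o).1, C1 a⟩⟩
  -- distributing `a ∨ -` over `p b c 1` by C3 leaves `p (a ∨ b) c (a ∨ 1)`
  rw [C3, join_one]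

theorem stmt_7 {A : Type*} (p : A → A → A → A) (z o : A)
    (C1 : ∀ a, p z a o = a)
    (C2 : ∀ a b, p a b a = a)
    (C3 : ∀ a b1 b2 b3 c, p a (p b1 b2 b3) c = p (p a b1 c) b2 (p a b3 c))
    (C4 : ∀ a b, p a z b = a ∧ p b o a = a) :
    (∀ a b c, p (p a b o) c o = p a (p b c o) o) ∧ (∀ a, p a z o = a ∧ p z a o = a) :=
  stmt_7_general p z o C1 C3 C4
end

section
/- In a system (A,p,0,1) satisfying C1–C4 with x̄ = p(1,x,0), a∧b = p(0,a,b), a∨b = p(a,b,1): ∧ is commutative if and only if ∨ is commutative. -/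
/-!
Writing `x̄ = p 1 x 0`, complementation is an involution and satisfies the De Morgan laws
`b ∨ a = (ā ∧ b̄)‾` and `a ∧ b = (b̄ ∨ ā)‾`, so commutativity transfers between `∧` and `∨`.
-/

namespace TernarySystem

variable {A : Type*} {p : A → A → A → A} {z o : A}

theorem compl_meet (C3 : ∀ a b1 b2 b3 c, p a (p b1 b2 b3) c = p (p a b1 c) b2 (p a b3 c))
    (hz : ∀ a b, p a z b = a) (a b : A) :
    p o (p z a b) z = p o a (p o b z) := by
  rw [C3, hz]

theorem compl_compl (C1 : ∀ a, p z a o = a)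
    (C3 : ∀ a b1 b2 b3 c, p a (p b1 b2 b3) c = p (p a b1 c) b2 (p a b3 c))
    (hz : ∀ a b, p a z b = a) (ho : ∀ a b, p a o b = b) (x : A) :
    p o (p o x z) z = x := by
  rw [C3, ho, hz, C1]

theorem join_eq_compl_meet_compl (C1 : ∀ a, p z a o = a)
    (C3 : ∀ a b1 b2 b3 c, p a (p b1 b2 b3) c = p (p a b1 c) b2 (p a b3 c))
    (hz : ∀ a b, p a z b = a) (ho : ∀ a b, p a o b = b) (a b : A) :
    p b a o = p o (p z (p o a z) (p o b z)) z := by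
  rw [compl_meet C3 hz, compl_compl C1 C3 hz ho, C3, ho, hz]

theorem meet_eq_compl_join_compl (C1 : ∀ a, p z a o = a)
    (C3 : ∀ a b1 b2 b3 c, p a (p b1 b2 b3) c = p (p a b1 c) b2 (p a b3 c))
    (hz : ∀ a b, p a z b = a) (ho : ∀ a b, p a o b = b) (a b : A) :
    p z a b = p o (p (p o b z) (p o a z) o) z := by
  rw [join_eq_compl_meet_compl C1 C3 hz ho, compl_compl C1 C3 hz ho,
    compl_compl C1 C3 hz ho, compl_compl C1 C3 hz ho]

end TernarySystem

theorem stmt_9_general {A : Type*} (p : A → A → A → A) (z o : A)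
    (C1 : ∀ a, p z a o = a)
    (C3 : ∀ a b1 b2 b3 c, p a (p b1 b2 b3) c = p (p a b1 c) b2 (p a b3 c))
    (C4 : ∀ a b, p a z b = a ∧ p b o a = a) :
    (∀ a b, p z a b = p z b a) ↔ (∀ a b, p a b o = p b a o) := by
  have hz : ∀ a b, p a z b = a := fun a b => (C4 a b).1
  have ho : ∀ a b, p a o b = b := fun a b => (C4 b a).2
  have deMorgan_join := TernarySystem.join_eq_compl_meet_compl C1 C3 hz ho
  have deMorgan_meet := TernarySystem.meet_eq_compl_join_compl C1 C3 hz ho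
  constructor
  · intro hmeet a b
    rw [deMorgan_join, deMorgan_join, hmeet]
  · intro hjoin a b
    rw [deMorgan_meet, deMorgan_meet, hjoin]

theorem stmt_9 {A : Type*} (p : A → A → A → A) (z o : A)
    (C1 : ∀ a, p z a o = a)
    (C2 : ∀ a b, p a b a = a)
    (C3 : ∀ a b1 b2 b3 c, p a (p b1 b2 b3) c = p (p a b1 c) b2 (p a b3 c))
    (C4 : ∀ a b, p a z b = a ∧ p b o a = a) :
    (∀ a b, p z a b = p z b a) ↔ (∀ a b, p a b o = p b a o) :=
  stmt_9_general p z o C1 C3 C4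
end

section
/- In a system (A,p,0,1) satisfying C1–C4 with x̄ = p(1,x,0), a∧b = p(0,a,b), a∨b = p(a,b,1): ∧ is idempotent if and only if ∨ is idempotent. -/
/-! Complementation `x ↦ p 1 x 0` is an involution that exchanges `x ∧ x` and `x ∨ x` up to
complementing `x`, so idempotence of either operation transfers to the other. -/

namespace Ternary

variable {A : Type*} (p : A → A → A → A) (z o : A)

theorem compl_compl (C1 : ∀ a, p z a o = a)
    (C3 : ∀ a b1 b2 b3 c, p a (p b1 b2 b3) c = p (p a b1 c) b2 (p a b3 c))
    (hz : ∀ u v, p u z v = u) (ho : ∀ u v, p u o v = v) (x : A) :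
    p o (p o x z) z = x := by
  rw [C3, ho, hz, C1]

theorem compl_sup_compl_self
    (C3 : ∀ a b1 b2 b3 c, p a (p b1 b2 b3) c = p (p a b1 c) b2 (p a b3 c))
    (hz : ∀ u v, p u z v = u) (ho : ∀ u v, p u o v = v) (x : A) :
    p (p o x z) (p o x z) o = p o (p z x x) z := by
  rw [C3 (p o x z), ho, hz, C3 o, hz]

theorem compl_inf_compl_self
    (C3 : ∀ a b1 b2 b3 c, p a (p b1 b2 b3) c = p (p a b1 c) b2 (p a b3 c))
    (hz : ∀ u v, p u z v = u) (ho : ∀ u v, p u o v = v) (x : A) :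
    p z (p o x z) (p o x z) = p o (p x x o) z := by
  rw [C3 z, ho, hz, C3 o, ho]

end Ternary


theorem stmt_10_general {A : Type*} (p : A → A → A → A) (z o : A)
    (C1 : ∀ a, p z a o = a)
    (C3 : ∀ a b1 b2 b3 c, p a (p b1 b2 b3) c = p (p a b1 c) b2 (p a b3 c))
    (C4 : ∀ a b, p a z b = a ∧ p b o a = a) :
    (∀ a, p z a a = a) ↔ (∀ a, p a a o = a) := by
  have hz : ∀ u v, p u z v = u := fun u v => (C4 u v).1
  have ho : ∀ u v, p u o v = v := fun u v => (C4 v u).2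
  have cc := Ternary.compl_compl p z o C1 C3 hz ho
  constructor
  · intro hinf a
    rw [← cc a, Ternary.compl_sup_compl_self p z o C3 hz ho, hinf]
  · intro hsup a
    rw [← cc a, Ternary.compl_inf_compl_self p z o C3 hz ho, hsup]

theorem stmt_10 {A : Type*} (p : A → A → A → A) (z o : A)
    (C1 : ∀ a, p z a o = a)
    (C2 : ∀ a b, p a b a = a)
    (C3 : ∀ a b1 b2 b3 c, p a (p b1 b2 b3) c = p (p a b1 c) b2 (p a b3 c))
    (C4 : ∀ a b, p a z b = a ∧ p b o a = a) :
    (∀ a, p z a a = a) ↔ (∀ a, p a a o = a) :=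
  stmt_10_general p z o C1 C3 C4
end

section
/- In a system (A,p,0,1) satisfying C1–C4, if ∧ and ∨ (defined by a∧b = p(0,a,b), a∨b = p(a,b,1)) are commutative and idempotent, then the absorption laws a∨(b∧a) = a and (b∧a)∨a = a hold. -/
/-- Distributing `· ∨ a` over `p z b a` gives `p (a ∨ 0) b (a ∨ a) = p a b a = a`. -/
theorem join_meet_self_of_distrib {A : Type*} (p : A → A → A → A) (z o : A)
    (C2 : ∀ a b, p a b a = a)
    (C3 : ∀ a b1 b2 b3 c, p a (p b1 b2 b3) c = p (p a b1 c) b2 (p a b3 c))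
    (hz : ∀ a, p a z o = a) (hji : ∀ a, p a a o = a) (a b : A) :
    p a (p z b a) o = a := by
  rw [C3, hz, hji, C2]

theorem stmt_11_general {A : Type*} (p : A → A → A → A) (z o : A)
    (C2 : ∀ a b, p a b a = a)
    (C3 : ∀ a b1 b2 b3 c, p a (p b1 b2 b3) c = p (p a b1 c) b2 (p a b3 c))
    (C4 : ∀ a b, p a z b = a ∧ p b o a = a)
    (hjc : ∀ a b, p a b o = p b a o)
    (hji : ∀ a, p a a o = a) :
    ∀ a b, p a (p z b a) o = a ∧ p (p z b a) a o = a := by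
  intro a b
  have absorb := join_meet_self_of_distrib p z o C2 C3 (fun a => (C4 a o).1) hji a b
  exact ⟨absorb, hjc _ _ ▸ absorb⟩

theorem stmt_11 {A : Type*} (p : A → A → A → A) (z o : A)
    (C1 : ∀ a, p z a o = a)
    (C2 : ∀ a b, p a b a = a)
    (C3 : ∀ a b1 b2 b3 c, p a (p b1 b2 b3) c = p (p a b1 c) b2 (p a b3 c))
    (C4 : ∀ a b, p a z b = a ∧ p b o a = a)
    (hmc : ∀ a b, p z a b = p z b a) (hjc : ∀ a b, p a b o = p b a o)
    (hmi : ∀ a, p z a a = a) (hji : ∀ a, p a a o = a) :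
    ∀ a b, p a (p z b a) o = a ∧ p (p z b a) a o = a :=
  stmt_11_general p z o C2 C3 C4 hjc hji
end

section
/- In a system (A,p,0,1) satisfying C1–C4, if the operations a∧b = p(0,a,b) and a∨b = p(a,b,1) are commutative and idempotent, then they distribute over each other: (b∨c)∧a = (b∧a)∨(c∧a) and a∨(b∧c) = (a∨b)∧(a∨c). -/
/-! Expanding with (C3) turns `(b ∨ c) ∧ a` and `(b ∧ a) ∨ (c ∧ a)` into `p (b ∧ a) c a` and
`p (b ∧ a) c ((b ∧ a) ∨ a)`, so the first law reduces to the absorption law `(b ∧ a) ∨ a = a`;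
dually, the second reduces to `a ∧ (a ∨ c) = a`. Both absorption laws follow from (C3) together
with commutativity, idempotence and (C2). -/

section TernarySystem

variable {A : Type*} {p : A → A → A → A} {z o : A}

theorem join_meet_absorb (C2 : ∀ a b, p a b a = a)
    (C3 : ∀ a b1 b2 b3 c, p a (p b1 b2 b3) c = p (p a b1 c) b2 (p a b3 c))
    (hz : ∀ a b, p a z b = a) (hjc : ∀ a b, p a b o = p b a o) (hji : ∀ a, p a a o = a)
    (a b : A) : p (p z b a) a o = a := by
  rw [hjc, C3, hz, hji, C2]

theorem meet_join_absorb (C2 : ∀ a b, p a b a = a)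
    (C3 : ∀ a b1 b2 b3 c, p a (p b1 b2 b3) c = p (p a b1 c) b2 (p a b3 c))
    (ho : ∀ a b, p a o b = b) (hmc : ∀ a b, p z a b = p z b a) (hmi : ∀ a, p z a a = a)
    (a c : A) : p z a (p a c o) = a := by
  rw [hmc, C3, hmi, ho, C2]

theorem meet_join_distrib (C2 : ∀ a b, p a b a = a)
    (C3 : ∀ a b1 b2 b3 c, p a (p b1 b2 b3) c = p (p a b1 c) b2 (p a b3 c))
    (hz : ∀ a b, p a z b = a) (ho : ∀ a b, p a o b = b)
    (hjc : ∀ a b, p a b o = p b a o) (hji : ∀ a, p a a o = a) (a b c : A) :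
    p z (p b c o) a = p (p z b a) (p z c a) o := by
  rw [C3, ho, C3, hz, join_meet_absorb C2 C3 hz hjc hji]

theorem join_meet_distrib (C2 : ∀ a b, p a b a = a)
    (C3 : ∀ a b1 b2 b3 c, p a (p b1 b2 b3) c = p (p a b1 c) b2 (p a b3 c))
    (hz : ∀ a b, p a z b = a) (ho : ∀ a b, p a o b = b)
    (hmc : ∀ a b, p z a b = p z b a) (hmi : ∀ a, p z a a = a) (a b c : A) :
    p a (p z b c) o = p z (p a b o) (p a c o) := by
  rw [C3, hz, C3, ho, meet_join_absorb C2 C3 ho hmc hmi]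

end TernarySystem

theorem stmt_12_general {A : Type*} (p : A → A → A → A) (z o : A)
    (C2 : ∀ a b, p a b a = a)
    (C3 : ∀ a b1 b2 b3 c, p a (p b1 b2 b3) c = p (p a b1 c) b2 (p a b3 c))
    (C4 : ∀ a b, p a z b = a ∧ p b o a = a)
    (hmc : ∀ a b, p z a b = p z b a) (hjc : ∀ a b, p a b o = p b a o)
    (hmi : ∀ a, p z a a = a) (hji : ∀ a, p a a o = a) :
    ∀ a b c, p z (p b c o) a = p (p z b a) (p z c a) o ∧ p a (p z b c) o = p z (p a b o) (p a c o) := by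
  have hz : ∀ a b, p a z b = a := fun a b => (C4 a b).1
  have ho : ∀ a b, p a o b = b := fun a b => (C4 b a).2
  exact fun a b c => ⟨meet_join_distrib C2 C3 hz ho hjc hji a b c,
    join_meet_distrib C2 C3 hz ho hmc hmi a b c⟩

theorem stmt_12 {A : Type*} (p : A → A → A → A) (z o : A)
    (C1 : ∀ a, p z a o = a)
    (C2 : ∀ a b, p a b a = a)
    (C3 : ∀ a b1 b2 b3 c, p a (p b1 b2 b3) c = p (p a b1 c) b2 (p a b3 c))
    (C4 : ∀ a b, p a z b = a ∧ p b o a = a)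
    (hmc : ∀ a b, p z a b = p z b a) (hjc : ∀ a b, p a b o = p b a o)
    (hmi : ∀ a, p z a a = a) (hji : ∀ a, p a a o = a) :
    ∀ a b c, p z (p b c o) a = p (p z b a) (p z c a) o ∧ p a (p z b c) o = p z (p a b o) (p a c o) :=
  stmt_12_general p z o C2 C3 C4 hmc hjc hmi hji
end

section
/- In a system (A,p,0,1) satisfying C1–C4, for all a,b,c: p(a,b,c)∧c = (a∨b)∧c, where a∧b = p(0,a,b) and a∨b = p(a,b,1). -/
theorem stmt_13_general {A : Type*} (p : A → A → A → A) (z o : A)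
    (C3 : ∀ a b1 b2 b3 c, p a (p b1 b2 b3) c = p (p a b1 c) b2 (p a b3 c))
    (C4 : ∀ a b, p a z b = a ∧ p b o a = a)
    (hmi : ∀ c, p z c c = c) :
    ∀ a b c, p z (p a b c) c = p z (p a b o) c := by
  intro a b c
  rw [C3, C3, hmi, (C4 c z).2]

theorem stmt_13 {A : Type*} (p : A → A → A → A) (z o : A)
    (C1 : ∀ a, p z a o = a)
    (C2 : ∀ a b, p a b a = a)
    (C3 : ∀ a b1 b2 b3 c, p a (p b1 b2 b3) c = p (p a b1 c) b2 (p a b3 c))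
    (C4 : ∀ a b, p a z b = a ∧ p b o a = a)
    (hmi : ∀ c, p z c c = c) :
    ∀ a b c, p z (p a b c) c = p z (p a b o) c :=
  stmt_13_general p z o C3 C4 hmi
end

section
/- In a system (A,p,0,1) satisfying C1–C4 with ∨ idempotent, for all a,b,c: c∨p(a,b,c) = c∨(b̄∧a), where a∧b = p(0,a,b), a∨b = p(a,b,1), x̄ = p(1,x,0). -/
theorem stmt_14_general {A : Type*} (p : A → A → A → A) (z o : A)
    (C3 : ∀ a b1 b2 b3 c, p a (p b1 b2 b3) c = p (p a b1 c) b2 (p a b3 c))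
    (C4 : ∀ a b, p a z b = a ∧ p b o a = a)
    (hji : ∀ c, p c c o = c) :
    ∀ a b c, p c (p a b c) o = p c (p z (p o b z) a) o := by
  intro a b c
  have p_zero : ∀ x y, p x z y = x := fun x y => (C4 x y).1
  have p_one : ∀ x y, p x o y = y := fun x y => (C4 y x).2
  calc p c (p a b c) o = p (p c a o) b c := by rw [C3, hji]
    _ = p c (p z (p o b z) a) o := by rw [C3, p_zero, C3, p_one, p_zero]

theorem stmt_14 {A : Type*} (p : A → A → A → A) (z o : A)
    (C1 : ∀ a, p z a o = a)
    (C2 : ∀ a b, p a b a = a)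
    (C3 : ∀ a b1 b2 b3 c, p a (p b1 b2 b3) c = p (p a b1 c) b2 (p a b3 c))
    (C4 : ∀ a b, p a z b = a ∧ p b o a = a)
    (hji : ∀ c, p c c o = c) :
    ∀ a b c, p c (p a b c) o = p c (p z (p o b z) a) o :=
  stmt_14_general p z o C3 C4 hji
end

section
/- In a system (A,p,0,1) satisfying C1–C4 with a∧b = p(0,a,b) commutative, if p(a,b,c) = (b̄∧a)∨(b∧c) for all a,b,c (where a∨b = p(a,b,1) and x̄ = p(1,x,0)), then complementation holds: ā∨a = 1 and ā∧a = 0 for all a. -/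
/-!
Read `p a b c` as "if `b` then `c` else `a`". The representation
`p a b c = (b̄ ∧ a) ∨ (b ∧ c)` at `a = c = 1` gives `ā ∨ a = 1` outright. For the meet, C3
first gives double complementation, `p 1 ā 0 = a`; complementing both sides of `ā ∨ a = 1`
and distributing by C3 then yields `p a a 0 = 0`, and one more use of C3 turns
`ā ∧ a = p 0 (p 1 a 0) a` into `p (1 ∧ a) a (0 ∧ a) = p a a 0 = 0`.
-/

namespace TernaryOperation

variable {A : Type*} {p : A → A → A → A} {z o : A}

theorem compl_sup_self (C1 : ∀ a, p z a o = a) (C2 : ∀ a b, p a b a = a)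
    (hp : ∀ a b c, p a b c = p (p z (p o b z) a) (p z b c) o) (a : A) :
    p (p o a z) a o = o := by
  simpa only [C2, C1] using (hp o a o).symm

theorem compl_compl (C1 : ∀ a, p z a o = a)
    (C3 : ∀ a b1 b2 b3 c, p a (p b1 b2 b3) c = p (p a b1 c) b2 (p a b3 c))
    (hz : ∀ a b, p a z b = a) (ho : ∀ a b, p b o a = a) (a : A) :
    p o (p o a z) z = a := by
  rw [C3, ho, hz, C1]

theorem self_self_zero (C1 : ∀ a, p z a o = a) (C2 : ∀ a b, p a b a = a)
    (C3 : ∀ a b1 b2 b3 c, p a (p b1 b2 b3) c = p (p a b1 c) b2 (p a b3 c))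
    (hz : ∀ a b, p a z b = a) (ho : ∀ a b, p b o a = a)
    (hp : ∀ a b c, p a b c = p (p z (p o b z) a) (p z b c) o) (a : A) :
    p a a z = z := by
  have h := C3 o (p o a z) a o z
  rwa [compl_sup_self C1 C2 hp, compl_compl C1 C3 hz ho, ho, eq_comm] at h

theorem inf_compl_self (C1 : ∀ a, p z a o = a) (C2 : ∀ a b, p a b a = a)
    (C3 : ∀ a b1 b2 b3 c, p a (p b1 b2 b3) c = p (p a b1 c) b2 (p a b3 c))
    (hz : ∀ a b, p a z b = a) (ho : ∀ a b, p b o a = a)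
    (hp : ∀ a b c, p a b c = p (p z (p o b z) a) (p z b c) o) (a : A) :
    p z (p o a z) a = z := by
  rw [C3, ho, hz, self_self_zero C1 C2 C3 hz ho hp]

end TernaryOperation

theorem stmt_15_general {A : Type*} (p : A → A → A → A) (z o : A)
    (C1 : ∀ a, p z a o = a)
    (C2 : ∀ a b, p a b a = a)
    (C3 : ∀ a b1 b2 b3 c, p a (p b1 b2 b3) c = p (p a b1 c) b2 (p a b3 c))
    (C4 : ∀ a b, p a z b = a ∧ p b o a = a)
    (hp : ∀ a b c, p a b c = p (p z (p o b z) a) (p z b c) o) :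
    ∀ a, p (p o a z) a o = o ∧ p z (p o a z) a = z := by
  have hz : ∀ a b, p a z b = a := fun a b => (C4 a b).1
  have ho : ∀ a b, p b o a = a := fun a b => (C4 a b).2
  exact fun a => ⟨TernaryOperation.compl_sup_self C1 C2 hp a,
    TernaryOperation.inf_compl_self C1 C2 C3 hz ho hp a⟩

theorem stmt_15 {A : Type*} (p : A → A → A → A) (z o : A)
    (C1 : ∀ a, p z a o = a)
    (C2 : ∀ a b, p a b a = a)
    (C3 : ∀ a b1 b2 b3 c, p a (p b1 b2 b3) c = p (p a b1 c) b2 (p a b3 c))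
    (C4 : ∀ a b, p a z b = a ∧ p b o a = a)
    (hmc : ∀ a b, p z a b = p z b a)
    (hp : ∀ a b c, p a b c = p (p z (p o b z) a) (p z b c) o) :
    ∀ a, p (p o a z) a o = o ∧ p z (p o a z) a = z :=
  stmt_15_general p z o C1 C2 C3 C4 hp
end

section
/- Let (A,p,0,1) satisfy C1–C4, with a∧b = p(0,a,b), a∨b = p(a,b,1), x̄ = p(1,x,0), and suppose ∧ is commutative. If p(a,a,b) = p(0,a,b) for all a,b, then (A,∨,∧,x̄,0,1) is a Boolean algebra (a complemented distributive bounded lattice). -/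
/-!
Read `p x a y` as "if a then y else x". With `a ∧ b = p 0 a b` and `a ∨ b = p a b 1`, axiom C3
says that each map `p a _ c` commutes with `p` acting through the middle argument; this yields
associativity of both operations and makes the complement `x̄ = p 1 x 0` an involution. The
identity `p a a b = a ∧ b` turns `p` into a genuine conditional, giving absorption, distributivity
and the complement laws; commutativity of `∨` is the De Morgan dual of that of `∧`.
-/

structure IsPSystem {A : Type*} (p : A → A → A → A) (z o : A) : Prop where
  zero_mid_one : ∀ a, p z a o = a
  outer_self : ∀ a b, p a b a = a
  mid_p : ∀ a b₁ b₂ b₃ c, p a (p b₁ b₂ b₃) c = p (p a b₁ c) b₂ (p a b₃ c)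
  mid_zero : ∀ a b, p a z b = a
  mid_one : ∀ a b, p b o a = a

namespace IsPSystem

variable {A : Type*} {p : A → A → A → A} {z o : A}

theorem sup_assoc (h : IsPSystem p z o) (a b c : A) :
    p a (p b c o) o = p (p a b o) c o := by
  rw [h.mid_p, h.mid_one]

theorem inf_assoc (h : IsPSystem p z o) (a b c : A) :
    p z (p z a b) c = p z a (p z b c) := by
  rw [h.mid_p, h.mid_zero]

theorem compl_compl (h : IsPSystem p z o) (a : A) : p o (p o a z) z = a := by
  rw [h.mid_p, h.mid_one, h.mid_zero, h.zero_mid_one]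

theorem compl_p_compl (h : IsPSystem p z o) (a b : A) :
    p o (p (p o b z) a z) z = p b a o := by
  rw [h.mid_p, h.compl_compl, h.mid_zero]

theorem top_inf (h : IsPSystem p z o) (hcomm : ∀ a b, p z a b = p z b a) (a : A) :
    p z o a = a := by
  rw [hcomm, h.zero_mid_one]

theorem inf_compl_compl (h : IsPSystem p z o) (hcomm : ∀ a b, p z a b = p z b a) (a b : A) :
    p z (p o a z) (p o b z) = p (p o b z) a z := by
  rw [h.mid_p, h.top_inf hcomm, h.mid_zero]

theorem sup_comm (h : IsPSystem p z o) (hcomm : ∀ a b, p z a b = p z b a) (a b : A) :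
    p a b o = p b a o := by
  rw [← h.compl_p_compl b a, ← h.compl_p_compl a b, ← h.inf_compl_compl hcomm a b,
    ← h.inf_compl_compl hcomm b a, hcomm]

theorem inf_self (h : IsPSystem p z o) (hidem : ∀ a b, p a a b = p z a b) (a : A) :
    p z a a = a := by
  rw [← hidem, h.outer_self]

theorem inf_sup_self (h : IsPSystem p z o) (hcomm : ∀ a b, p z a b = p z b a)
    (hidem : ∀ a b, p a a b = p z a b) (a b : A) : p z a (p a b o) = a := by
  rw [hcomm, h.mid_p, h.inf_self hidem, h.top_inf hcomm, h.outer_self]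

theorem sup_inf_self (h : IsPSystem p z o) (hcomm : ∀ a b, p z a b = p z b a)
    (hidem : ∀ a b, p a a b = p z a b) (a b : A) : p a (p z a b) o = a := by
  rw [h.mid_p, h.mid_zero, hidem, h.inf_sup_self hcomm hidem]

theorem sup_inf_left (h : IsPSystem p z o) (hcomm : ∀ a b, p z a b = p z b a)
    (hidem : ∀ a b, p a a b = p z a b) (a b c : A) :
    p a (p z b c) o = p z (p a b o) (p a c o) := by
  rw [h.mid_p a z b, h.mid_zero, h.mid_p z a b, h.inf_sup_self hcomm hidem, h.top_inf hcomm]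

theorem inf_compl_self (h : IsPSystem p z o) (hcomm : ∀ a b, p z a b = p z b a)
    (hidem : ∀ a b, p a a b = p z a b) (a : A) : p z a (p o a z) = z := by
  rw [hcomm, h.mid_p, h.top_inf hcomm, h.mid_zero, hidem, h.outer_self]

theorem sup_compl_self (h : IsPSystem p z o) (hidem : ∀ a b, p a a b = p z a b) (a : A) :
    p a (p o a z) o = o := by
  have h' := h.compl_p_compl (p o a z) a
  rw [hidem, h.outer_self, h.mid_zero] at h'
  exact h'.symm

abbrev toBooleanAlgebra (h : IsPSystem p z o) (hcomm : ∀ a b, p z a b = p z b a)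
    (hidem : ∀ a b, p a a b = p z a b) : BooleanAlgebra A :=
  letI : Max A := ⟨fun a b => p a b o⟩
  letI : Min A := ⟨fun a b => p z a b⟩
  letI : Lattice A := Lattice.mk' (h.sup_comm hcomm) (fun a b c => (h.sup_assoc a b c).symm)
    hcomm h.inf_assoc (h.sup_inf_self hcomm hidem) (h.inf_sup_self hcomm hidem)
  { le_sup_inf := fun a b c => (h.sup_inf_left hcomm hidem a b c).ge
    top := o
    bot := z
    compl := fun a => p o a z
    sdiff := fun a b => p z a (p o b z)
    himp := fun a b => p b (p o a z) o
    le_top := fun a => sup_eq_right.mp (h.mid_one o a)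
    bot_le := fun a => sup_eq_right.mp (h.zero_mid_one a)
    inf_compl_le_bot := fun a => (h.inf_compl_self hcomm hidem a).le
    top_le_sup_compl := fun a => (h.sup_compl_self hidem a).ge
    sdiff_eq := fun _ _ => rfl
    himp_eq := fun _ _ => rfl }

end IsPSystem

theorem stmt_17 {A : Type*} (p : A → A → A → A) (z o : A)
    (C1 : ∀ a, p z a o = a)
    (C2 : ∀ a b, p a b a = a)
    (C3 : ∀ a b1 b2 b3 c, p a (p b1 b2 b3) c = p (p a b1 c) b2 (p a b3 c))
    (C4 : ∀ a b, p a z b = a ∧ p b o a = a)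
    (hmc : ∀ a b, p z a b = p z b a)
    (hT3 : ∀ a b, p a a b = p z a b) :
    ∃ B : BooleanAlgebra A,
      B.inf = (fun a b => p z a b) ∧ B.sup = (fun a b => p a b o) ∧
      B.compl = (fun x => p o x z) ∧ B.bot = z ∧ B.top = o := by
  have h : IsPSystem p z o :=
    ⟨C1, C2, C3, fun a b => (C4 a b).1, fun a b => (C4 a b).2⟩
  exact ⟨h.toBooleanAlgebra hmc hT3, rfl, rfl, rfl, rfl, rfl⟩
end

section
/- Let (A,p,0,1) satisfy C1–C4 with a∧b = p(0,a,b) commutative. If (A,∨,∧,x̄,0,1) is a Boolean algebra (with a∨b = p(a,b,1) and x̄ = p(1,x,0)), then p(a,b,c) = (b̄∧a)∨(b∧c) for all a,b,c. -/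
/-!
Meeting and joining with `a` are themselves instances of `p` (`x ⊓ a = p ⊥ x a`,
`a ⊔ x = p a x ⊤`), so C3 pushes them into the third argument of `p a b c`. There the argument
lies below or above `a`, where C3 and C4 evaluate `p a b _` explicitly. Hence `p a b c` and
`(bᶜ ⊓ a) ⊔ (b ⊓ c)` have the same meet and the same join with `a`, and cancellation in a
distributive lattice makes them equal.
-/

section TernaryOperation

variable {A : Type*} [BooleanAlgebra A] {p : A → A → A → A}

lemma p_inf_eq (C3 : ∀ a b1 b2 b3 c, p a (p b1 b2 b3) c = p (p a b1 c) b2 (p a b3 c))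
    (h_inf : ∀ a b : A, a ⊓ b = p ⊥ a b) (a b c : A) :
    p a b c ⊓ a = p a b (c ⊓ a) := by
  rw [h_inf, C3, ← h_inf, inf_idem, ← h_inf]

lemma sup_p_eq (C3 : ∀ a b1 b2 b3 c, p a (p b1 b2 b3) c = p (p a b1 c) b2 (p a b3 c))
    (h_sup : ∀ a b : A, a ⊔ b = p a b ⊤) (a b c : A) :
    a ⊔ p a b c = p a b (a ⊔ c) := by
  rw [h_sup, C3, ← h_sup, sup_idem, ← h_sup]

lemma p_eq_of_le (C3 : ∀ a b1 b2 b3 c, p a (p b1 b2 b3) c = p (p a b1 c) b2 (p a b3 c))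
    (C4 : ∀ a b, p a ⊥ b = a ∧ p b ⊤ a = a)
    (h_inf : ∀ a b : A, a ⊓ b = p ⊥ a b) (h_sup : ∀ a b : A, a ⊔ b = p a b ⊤)
    (h_compl : ∀ x : A, xᶜ = p ⊤ x ⊥) {a d : A} (hda : d ≤ a) (b : A) :
    p a b d = (d ⊔ bᶜ) ⊓ a := by
  rw [h_inf, h_sup, C3, ← h_inf, inf_eq_left.mpr hda, (C4 a ⊥).2, h_compl, C3,
    (C4 a d).2, (C4 d a).1]

lemma p_eq_of_ge (C3 : ∀ a b1 b2 b3 c, p a (p b1 b2 b3) c = p (p a b1 c) b2 (p a b3 c))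
    (C4 : ∀ a b, p a ⊥ b = a ∧ p b ⊤ a = a)
    (h_inf : ∀ a b : A, a ⊓ b = p ⊥ a b) (h_sup : ∀ a b : A, a ⊔ b = p a b ⊤)
    {a d : A} (had : a ≤ d) (b : A) :
    p a b d = a ⊔ (b ⊓ d) := by
  rw [h_sup, h_inf, C3, (C4 a ⊤).1, ← h_sup, sup_eq_right.mpr had]

end TernaryOperation

theorem stmt_18_general {A : Type*} [BooleanAlgebra A] (p : A → A → A → A)
    (C3 : ∀ a b1 b2 b3 c, p a (p b1 b2 b3) c = p (p a b1 c) b2 (p a b3 c))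
    (C4 : ∀ a b, p a ⊥ b = a ∧ p b ⊤ a = a)
    (h_inf : ∀ a b : A, a ⊓ b = p ⊥ a b)
    (h_sup : ∀ a b : A, a ⊔ b = p a b ⊤)
    (h_compl : ∀ x : A, xᶜ = p ⊤ x ⊥) :
    ∀ a b c, p a b c = (bᶜ ⊓ a) ⊔ (b ⊓ c) := by
  intro a b c
  refine eq_of_inf_eq_sup_eq (a := a) ?_ ?_
  · calc p a b c ⊓ a = (c ⊓ a ⊔ bᶜ) ⊓ a := by
          rw [p_inf_eq C3 h_inf, p_eq_of_le C3 C4 h_inf h_sup h_compl inf_le_right]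
      _ = (c ⊔ bᶜ) ⊓ a := by rw [inf_sup_right, inf_sup_right, inf_assoc, inf_idem]
      _ = (bᶜ ⊔ b ⊓ c) ⊓ a := by rw [sup_inf_left, compl_sup_eq_top, top_inf_eq, sup_comm]
      _ = (bᶜ ⊓ a ⊔ b ⊓ c) ⊓ a := by rw [inf_sup_right, inf_sup_right, inf_assoc bᶜ, inf_idem]
  · calc p a b c ⊔ a = a ⊔ b ⊓ (a ⊔ c) := by
          rw [sup_comm, sup_p_eq C3 h_sup, p_eq_of_ge C3 C4 h_inf h_sup le_sup_left]
      _ = a ⊔ b ⊓ c := by rw [sup_inf_left, sup_left_idem, ← sup_inf_left]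
      _ = (bᶜ ⊓ a ⊔ a) ⊔ b ⊓ c := by rw [sup_of_le_right (inf_le_right : bᶜ ⊓ a ≤ a)]
      _ = (bᶜ ⊓ a ⊔ b ⊓ c) ⊔ a := sup_right_comm _ _ _

theorem stmt_18 {A : Type*} [BooleanAlgebra A] (p : A → A → A → A)
    (C1 : ∀ a, p ⊥ a ⊤ = a)
    (C2 : ∀ a b, p a b a = a)
    (C3 : ∀ a b1 b2 b3 c, p a (p b1 b2 b3) c = p (p a b1 c) b2 (p a b3 c))
    (C4 : ∀ a b, p a ⊥ b = a ∧ p b ⊤ a = a)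
    (h_inf : ∀ a b : A, a ⊓ b = p ⊥ a b)
    (h_sup : ∀ a b : A, a ⊔ b = p a b ⊤)
    (h_compl : ∀ x : A, xᶜ = p ⊤ x ⊥) :
    ∀ a b c, p a b c = (bᶜ ⊓ a) ⊔ (b ⊓ c) :=
  stmt_18_general p C3 C4 h_inf h_sup h_compl
end
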